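/- arXiv:1601.00041 — 6 statements merged into one kernel-verified Lean document; each statement's English description precedes it below -/
import Mathlib

section
/- If I is a finite index set, the unary predicates P_i (i ∈ I) are pairwise disjoint, each structure A_i (with universe P_i) in an at most countable relational language is either finite or ω-categorical, and the disjoint union structure A_P = ⋃_{i∈I} A_i expanded by the predicates P_i is infinite, then the theory Th(A_P) is ω-categorical. -/
open FirstOrder Language Cardinal

set_option autoImplicit false

/-- The induced structure on a subset of the universe of a structure in a relational language. -/
def subStructure (L : FirstOrder.Language.{0,0}) [L.IsRelational] (M : Type) [L.Structure M]
    (s : Set M) : L.Structure s where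
  funMap := fun f _ => isEmptyElim f
  RelMap := fun r x => Structure.RelMap r (fun k => (x k : M))

/-- The complete theory of the induced structure on a subset. -/
noncomputable def partTheory (L : FirstOrder.Language.{0,0}) [L.IsRelational] (M : Type)
    [L.Structure M] (s : Set M) : L.Theory :=
  @FirstOrder.Language.completeTheory L s (subStructure L M s)

/-- The number of models of `T` of cardinality `κ`, up to isomorphism. -/
noncomputable def numModels (L : FirstOrder.Language.{0,0}) (T : L.Theory) (κ : Cardinal) :
    Cardinal :=
  #(Quot (fun (N N' : {N : FirstOrder.Language.Theory.ModelType.{0,0,0} T // #N.1 = κ}) => Nonempty (N.1 ≃[L] N'.1)))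

/-- A theory is ω-categorical if it has exactly one countable model up to isomorphism. -/
def OmegaCategorical (L : FirstOrder.Language.{0,0}) (T : L.Theory) : Prop :=
  numModels L T ℵ₀ = 1
/-!
A countable model `N` of `Th(M)` is again a disjoint `P`-combination: disjointness, covering and
the absence of relations across parts are expressed by first-order sentences, because `I` is
finite. Relativizing sentences to `P i` shows that each part `N_i` is elementarily equivalent to
`M_i`. A finite `M_i` determines `N_i` up to isomorphism, and an infinite `M_i` makes `N_i` a
countably infinite model of the ω-categorical `Th(M_i)`. So the parts of two countable models are
isomorphic, and these isomorphisms glue to an isomorphism of the models. A countable model exists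
by the downward Löwenheim–Skolem theorem.
-/

attribute [local instance] subStructure

namespace FirstOrder.Language

open Structure

variable {L : Language.{0, 0}}

theorem omegaCategorical_iff {T : L.Theory} :
    OmegaCategorical L T ↔
      (∃ N : Theory.ModelType.{0, 0, 0} T, #N = ℵ₀) ∧ (ℵ₀ : Cardinal.{0}).Categorical T := by
  have hequiv : Equivalence
      fun (N N' : {N : T.ModelType // #N = ℵ₀}) => Nonempty (N.1 ≃[L] N'.1) :=
    ⟨fun N => ⟨.refl L N.1⟩, fun ⟨e⟩ => ⟨e.symm⟩, fun ⟨e⟩ ⟨e'⟩ => ⟨e'.comp e⟩⟩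
  rw [OmegaCategorical, numModels, eq_one_iff_unique, Quot.subsingleton_iff, hequiv.eqvGen_eq,
    and_comm]
  refine and_congr
    ⟨fun ⟨q⟩ => q.inductionOn fun N => ⟨N.1, N.2⟩, fun ⟨N, hN⟩ => ⟨Quot.mk _ ⟨N, hN⟩⟩⟩
    ⟨fun h M N hM hN => (congrFun₂ h ⟨M, hM⟩ ⟨N, hN⟩).mpr trivial, fun h => ?_⟩
  funext M N
  exact eq_top_iff.2 fun _ => h M.1 N.1 M.2 N.2

theorem exists_modelType_completeTheory_card_eq_aleph0 (M : Type) [L.Structure M] [Infinite M]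
    (hL : L.card ≤ ℵ₀) :
    ∃ N : Theory.ModelType.{0, 0, 0} (L.completeTheory M), #N = ℵ₀ := by
  obtain ⟨N, hMN, hN⟩ := exists_elementarilyEquivalent_card_eq L M ℵ₀ le_rfl (by simpa using hL)
  have : N ⊨ L.completeTheory M := hMN.theory_model
  have : Infinite N := hMN.infinite
  exact ⟨.of _ N, hN⟩

section Finite

variable {A B : Type} [L.Structure A] [L.Structure B]

theorem ElementarilyEquivalent.finite_and_natCard_le [Finite A] (h : A ≅[L] B) :
    Finite B ∧ Nat.card B ≤ Nat.card A := by
  have hlt : #B < (Nat.card A + 1 : ℕ) := by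
    rw [← not_le, ← Sentence.realize_cardGe (L := L), ← h.realize_sentence,
      Sentence.realize_cardGe, ← Nat.cast_card, Nat.cast_le]
    omega
  have : Finite B := mk_lt_aleph0_iff.1 (hlt.trans natCast_lt_aleph0)
  rw [← Nat.cast_card, Nat.cast_lt] at hlt
  exact ⟨this, Nat.lt_succ_iff.1 hlt⟩

variable [L.IsRelational]

theorem nonempty_equiv_of_forall_realize_iff [Finite B] {n : ℕ} (e : Fin n ≃ A) (g : Fin n → B)
    (hB : Nat.card B ≤ n)
    (h : ∀ φ : L.BoundedFormula Empty n, φ.Realize default e ↔ φ.Realize default g) :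
    Nonempty (A ≃[L] B) := by
  have hinj : Function.Injective g := fun i j hij => e.injective <| by
    simpa using (h (&i =' &j)).2 (by simpa using hij)
  have hbij := hinj.bijective_of_nat_card_le (by simpa using hB)
  refine ⟨⟨e.symm.trans (Equiv.ofBijective g hbij), fun f => isEmptyElim f, fun r x => ?_⟩⟩
  simpa [Function.comp_def] using (h (r.boundedFormula fun k => &(e.symm (x k)))).symm

/-- If no map `Fin n → B` realized the same formulas as an enumeration `e` of `A`, choose for each
such map a formula separating it from `e`: the existential closure of their conjunction holds in
`A` but not in `B`. -/
theorem ElementarilyEquivalent.nonempty_equiv_of_finite [Finite A] (h : A ≅[L] B) :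
    Nonempty (A ≃[L] B) := by
  obtain ⟨hBfin, hBcard⟩ := h.finite_and_natCard_le
  let e : Fin (Nat.card A) ≃ A := (Finite.equivFin A).symm
  by_contra hAB
  have hsep : ∀ g : Fin (Nat.card A) → B, ∃ φ : L.BoundedFormula Empty (Nat.card A),
      φ.Realize default e ∧ ¬ φ.Realize default g := by
    intro g
    by_contra! hg
    exact hAB (nonempty_equiv_of_forall_realize_iff e g hBcard fun φ =>
      ⟨hg φ, not_imp_not.1 fun he => hg φ.not he⟩)
  choose φ hφ using hsep
  have hA : A ⊨ (BoundedFormula.iInf φ).exs :=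
    BoundedFormula.realize_exs.2 ⟨e, BoundedFormula.realize_iInf.2 fun g => (hφ g).1⟩
  obtain ⟨ys, hys⟩ := BoundedFormula.realize_exs.1 ((h.realize_sentence _).1 hA)
  exact (hφ ys).2 (BoundedFormula.realize_iInf.1 hys ys)

theorem nonempty_equiv_of_finite_or_omegaCategorical {B' : Type} [L.Structure B'] [Countable B]
    [Countable B'] (hA : Finite A ∨ OmegaCategorical L (L.completeTheory A)) (hB : A ≅[L] B)
    (hB' : A ≅[L] B') : Nonempty (B ≃[L] B') := by
  rcases finite_or_infinite A with hfin | hinf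
  · obtain ⟨e⟩ := hB.nonempty_equiv_of_finite
    obtain ⟨e'⟩ := hB'.nonempty_equiv_of_finite
    exact ⟨e'.comp e.symm⟩
  · have hcat := hA.resolve_left fun _ => not_finite A
    have : Infinite B := hB.infinite
    have : Infinite B' := hB'.infinite
    have : B ⊨ L.completeTheory A := hB.theory_model
    have : B' ⊨ L.completeTheory A := hB'.theory_model
    exact (omegaCategorical_iff.1 hcat).2 (.of _ B) (.of _ B') (mk_eq_aleph0 B) (mk_eq_aleph0 B')

end Finite

def predSet {M : Type} [L.Structure M] (p : L.Relations 1) : Set M := {a | RelMap p ![a]}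

noncomputable def BoundedFormula.relativize (p : L.Relations 1) {α : Type} :
    ∀ {n : ℕ}, L.BoundedFormula α n → L.BoundedFormula α n
  | _, .falsum => .falsum
  | _, .equal t₁ t₂ => .equal t₁ t₂
  | _, .rel r ts => .rel r ts
  | _, .imp φ ψ => (φ.relativize p).imp (ψ.relativize p)
  | n, .all φ => .all ((p.boundedFormula₁ &(Fin.last n)).imp (φ.relativize p))

section Relational

variable [L.IsRelational] {M N : Type} [L.Structure M] [L.Structure N] {p : L.Relations 1}

theorem Term.realize_subtype_val {β : Type} (t : L.Term β) (v : β → predSet (M := M) p) :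
    t.realize (Subtype.val ∘ v) = t.realize v := by
  cases t with
  | var => rfl
  | func f => exact isEmptyElim f

open BoundedFormula in
theorem BoundedFormula.realize_relativize {α : Type} {n : ℕ} (φ : L.BoundedFormula α n)
    (v : α → predSet (M := M) p) (xs : Fin n → predSet (M := M) p) :
    (φ.relativize p).Realize (Subtype.val ∘ v) (Subtype.val ∘ xs) ↔ φ.Realize v xs := by
  induction φ with
  | falsum => rfl
  | equal t₁ t₂ =>
    simp only [relativize, Realize, ← Sum.comp_elim, Term.realize_subtype_val, Subtype.val_inj]
  | rel r ts =>
    simp only [relativize, Realize, ← Sum.comp_elim, Term.realize_subtype_val]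
    rfl
  | imp φ ψ ihφ ihψ => simp only [relativize, realize_imp, ihφ, ihψ]
  | all φ ih =>
    simp only [relativize, realize_all, realize_imp, realize_rel₁, Function.comp_apply,
      Term.realize_var, Sum.elim_inr, Fin.snoc_last, Subtype.forall, ← ih, Fin.comp_snoc]
    rfl

theorem realize_sentence_predSet (φ : L.Sentence) :
    predSet (M := M) p ⊨ φ ↔ M ⊨ φ.relativize p := by
  have h := BoundedFormula.realize_relativize (M := M) (p := p) φ default default
  rw [Subsingleton.elim (Subtype.val ∘ _) default,
    Subsingleton.elim (Subtype.val ∘ _) default] at h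
  exact h.symm

theorem ElementarilyEquivalent.predSet (h : M ≅[L] N) (p : L.Relations 1) :
    predSet (M := M) p ≅[L] predSet (M := N) p :=
  elementarilyEquivalent_iff.2 fun φ => by
    rw [realize_sentence_predSet, realize_sentence_predSet, h.realize_sentence]

end Relational

structure IsPCombination {I : Type} (P : I → L.Relations 1) (M : Type) [L.Structure M] :
    Prop where
  disjoint : ∀ i j, i ≠ j → ∀ a : M, ¬(RelMap (P i) ![a] ∧ RelMap (P j) ![a])
  cover : ∀ a : M, ∃ i, RelMap (P i) ![a]
  noCross : ∀ (n : ℕ) (r : L.Relations n) (x : Fin n → M), RelMap r x →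
    ∃ i, ∀ k, RelMap (P i) ![x k]

namespace IsPCombination

variable {I : Type} {P : I → L.Relations 1} {M N : Type} [L.Structure M] [L.Structure N]

noncomputable def disjointSentence (p q : L.Relations 1) : L.Sentence :=
  ∀' ∼(p.boundedFormula₁ &0 ⊓ q.boundedFormula₁ &0)

noncomputable def coverSentence [Finite I] (P : I → L.Relations 1) : L.Sentence :=
  ∀' BoundedFormula.iSup fun i => (P i).boundedFormula₁ &0

noncomputable def noCrossSentence [Finite I] (P : I → L.Relations 1) {n : ℕ}
    (r : L.Relations n) : L.Sentence :=
  ((r.boundedFormula fun k => &k).imp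
    (BoundedFormula.iSup fun i => BoundedFormula.iInf fun k => (P i).boundedFormula₁ &k)).alls

theorem realize_disjointSentence {p q : L.Relations 1} :
    M ⊨ disjointSentence p q ↔ ∀ a : M, ¬(RelMap p ![a] ∧ RelMap q ![a]) := by
  simp [disjointSentence, Sentence.Realize, Formula.Realize, Fin.snoc]

theorem realize_coverSentence [Finite I] :
    M ⊨ coverSentence P ↔ ∀ a : M, ∃ i, RelMap (P i) ![a] := by
  simp [coverSentence, Sentence.Realize, Formula.Realize, Fin.snoc]

theorem realize_noCrossSentence [Finite I] {n : ℕ} {r : L.Relations n} :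
    M ⊨ noCrossSentence P r ↔
      ∀ x : Fin n → M, RelMap r x → ∃ i, ∀ k, RelMap (P i) ![x k] := by
  simp [noCrossSentence, Sentence.Realize]

theorem of_elementarilyEquivalent [Finite I] (hM : IsPCombination P M) (h : M ≅[L] N) :
    IsPCombination P N where
  disjoint i j hij := realize_disjointSentence.1 <|
    (h.realize_sentence _).1 (realize_disjointSentence.2 (hM.disjoint i j hij))
  cover := realize_coverSentence.1 <|
    (h.realize_sentence _).1 (realize_coverSentence.2 hM.cover)
  noCross n r := realize_noCrossSentence.1 <|
    (h.realize_sentence _).1 (realize_noCrossSentence.2 (hM.noCross n r))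

theorem eq_of_mem (hM : IsPCombination P M) {i j : I} {a : M} (hi : a ∈ predSet (P i))
    (hj : a ∈ predSet (P j)) : i = j :=
  by_contra fun hij => hM.disjoint i j hij a ⟨hi, hj⟩

noncomputable def glue (hM : IsPCombination P M)
    (f : ∀ i, predSet (M := M) (P i) → predSet (M := N) (P i)) : M → N :=
  Set.liftCover _ (fun i a => (f i a : N))
    (fun i j a hi hj => by obtain rfl := hM.eq_of_mem hi hj; rfl)
    (Set.iUnion_eq_univ_iff.2 hM.cover)

theorem glue_of_mem (hM : IsPCombination P M)
    (f : ∀ i, predSet (M := M) (P i) → predSet (M := N) (P i)) {i : I} {a : M}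
    (ha : a ∈ predSet (P i)) : hM.glue f a = f i ⟨a, ha⟩ :=
  Set.liftCover_of_mem (f := fun i a => (f i a : N)) ha

theorem glue_glue (hM : IsPCombination P M) (hN : IsPCombination P N)
    (f : ∀ i, predSet (M := M) (P i) → predSet (M := N) (P i))
    (g : ∀ i, predSet (M := N) (P i) → predSet (M := M) (P i))
    (hfg : ∀ i, Function.LeftInverse (g i) (f i)) (a : M) : hN.glue g (hM.glue f a) = a := by
  obtain ⟨i, hi⟩ := hM.cover a
  rw [hM.glue_of_mem f hi, hN.glue_of_mem g (f i ⟨a, hi⟩).2, hfg i]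

variable [L.IsRelational]

theorem map_rel_glue (hM : IsPCombination P M)
    (f : ∀ i, predSet (M := M) (P i) →[L] predSet (M := N) (P i)) {n : ℕ} (r : L.Relations n)
    (x : Fin n → M) (hx : RelMap r x) : RelMap r (hM.glue (fun i => f i) ∘ x) := by
  obtain ⟨i, hi⟩ := hM.noCross n r x hx
  have hglue : hM.glue (fun i => f i) ∘ x = fun k => (f i ⟨x k, hi k⟩ : N) :=
    funext fun k => hM.glue_of_mem _ (hi k)
  rw [hglue]
  exact (f i).map_rel r _ hx

theorem nonempty_equiv (hM : IsPCombination P M) (hN : IsPCombination P N)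
    (g : ∀ i, predSet (M := M) (P i) ≃[L] predSet (M := N) (P i)) : Nonempty (M ≃[L] N) := by
  let F := hM.glue fun i => (g i).toHom
  let G := hN.glue fun i => (g i).symm.toHom
  have hGF : Function.LeftInverse G F :=
    hM.glue_glue hN _ _ fun i => (g i).symm_apply_apply
  have hFG : Function.RightInverse G F :=
    hN.glue_glue hM _ _ fun i => (g i).apply_symm_apply
  refine ⟨⟨⟨F, G, hGF, hFG⟩, fun f => isEmptyElim f, fun r x => ⟨fun hx => ?_,
    hM.map_rel_glue (fun i => (g i).toHom) r x⟩⟩⟩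
  have := hN.map_rel_glue (fun i => (g i).symm.toHom) r _ hx
  rwa [← Function.comp_assoc, hGF.comp_eq_id, Function.id_comp] at this

end IsPCombination
end FirstOrder.Language

theorem stmt0_general (L : FirstOrder.Language.{0,0}) [L.IsRelational] (M : Type) [L.Structure M]
    (I : Type) (P : I → L.Relations 1)
    (hfin : Finite I)
    (hcard : L.card ≤ ℵ₀)
    (hdisj : ∀ i j : I, i ≠ j → ∀ a : M,
      ¬ (Structure.RelMap (P i) ![a] ∧ Structure.RelMap (P j) ![a]))
    (hcover : ∀ a : M, ∃ i : I, Structure.RelMap (P i) ![a])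
    (hnocross : ∀ (n : ℕ) (r : L.Relations n) (x : Fin n → M),
      Structure.RelMap r x → ∃ i : I, ∀ k : Fin n, Structure.RelMap (P i) ![x k])
    (hinf : Infinite M)
    (hparts : ∀ i : I,
      Set.Finite {a : M | Structure.RelMap (P i) ![a]} ∨
        OmegaCategorical L (partTheory L M {a : M | Structure.RelMap (P i) ![a]})) :
    OmegaCategorical L (L.completeTheory M) := by
  have := hfin
  have := hinf
  have hM : IsPCombination P M := ⟨hdisj, hcover, hnocross⟩
  have hequiv : ∀ N : Theory.ModelType.{0, 0, 0} (L.completeTheory M), M ≅[L] N := fun N =>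
    elementarilyEquivalent_iff.2 fun φ => (realize_iff_of_model_completeTheory M N φ).symm
  refine omegaCategorical_iff.2
    ⟨exists_modelType_completeTheory_card_eq_aleph0 M hcard, fun N N' hN hN' => ?_⟩
  have : Countable N := mk_le_aleph0_iff.1 hN.le
  have : Countable N' := mk_le_aleph0_iff.1 hN'.le
  refine (hM.of_elementarilyEquivalent (hequiv N)).nonempty_equiv
    (hM.of_elementarilyEquivalent (hequiv N')) fun i => Classical.choice ?_
  exact nonempty_equiv_of_finite_or_omegaCategorical ((hparts i).imp Set.Finite.to_subtype id)
    ((hequiv N).predSet (P i)) ((hequiv N').predSet (P i))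

/-- if `I` is finite, the unary predicates `P i` are pairwise disjoint and cover
the infinite structure `M` (which is the disjoint `P`-combination of the structures induced on
the sets `P i`, with no relations linking distinct parts), the language is at most countable,
and each part is finite or ω-categorical, then `Th(M)` is ω-categorical. -/
theorem stmt0 (L : FirstOrder.Language.{0,0}) [L.IsRelational] (M : Type) [L.Structure M]
    (I : Type) (P : I → L.Relations 1)
    (hfin : Finite I)
    (hcard : L.card ≤ ℵ₀)
    (hdisj : ∀ i j : I, i ≠ j → ∀ a : M,
      ¬ (Structure.RelMap (P i) ![a] ∧ Structure.RelMap (P j) ![a]))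
    (hne : ∀ i : I, ∃ a : M, Structure.RelMap (P i) ![a])
    (hcover : ∀ a : M, ∃ i : I, Structure.RelMap (P i) ![a])
    (hnocross : ∀ (n : ℕ) (r : L.Relations n) (x : Fin n → M),
      Structure.RelMap r x → ∃ i : I, ∀ k : Fin n, Structure.RelMap (P i) ![x k])
    (hinf : Infinite M)
    (hparts : ∀ i : I,
      Set.Finite {a : M | Structure.RelMap (P i) ![a]} ∨
        OmegaCategorical L (partTheory L M {a : M | Structure.RelMap (P i) ![a]})) :
    OmegaCategorical L (L.completeTheory M) :=
  stmt0_general L M I P hfin hcard hdisj hcover hnocross hinf hparts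
end

section
/- For any E-combination A_E of structures (A_i)_{i∈I}, the following are equivalent: (1) there exists A' ≡ A_E that is not E-representable (i.e., some E-class of A' carries a structure not elementarily equivalent to any A_i); (2) there exist sentences φ_i with A_i ⊨ φ_i for each i ∈ I, such that the set of relativized sentences (⋀_{i∈I_0} ¬φ_i)^E over all finite I_0 ⊆ I is consistent with Th(A_E). -/
open FirstOrder Language Cardinal

set_option autoImplicit false

/-- The `E`-class of an element `a`, as a set. -/
def classSet (L : FirstOrder.Language.{0,0}) {N : Type} [L.Structure N] (e : L.Relations 2)
    (a : N) : Set N :=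
  {b | Structure.RelMap e ![b, a]}

noncomputable instance (L : FirstOrder.Language.{0,0}) [L.IsRelational] {N : Type}
    [L.Structure N] (e : L.Relations 2) (a : N) : L.Structure (classSet L e a) :=
  subStructure L N (classSet L e a)

/-- The complete theory of the structure induced on the `E`-class of `a`. -/
noncomputable def classTheory (L : FirstOrder.Language.{0,0}) [L.IsRelational] {N : Type}
    [L.Structure N] (e : L.Relations 2) (a : N) : L.Theory :=
  L.completeTheory (classSet L e a)

/-!
(1) ⇒ (2): if the class of `a` is not elementarily equivalent to the class of `rep i`, some
sentence `φ i` holds in the latter and fails in the former.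

(2) ⇒ (1) is compactness, realised by an ultrapower: choose for each finite `s ⊆ I` an element
`a s` whose class satisfies `∼φ i` for all `i ∈ s`, and pass to the ultrapower of the model along
an ultrafilter on `Finset I` refining `atTop`. The class of the diagonal element `[a]` is
isomorphic to the ultraproduct of the classes of the `a s`, so by Łoś it satisfies every `∼φ i`
and hence differs from every class of `M`.
-/

open Structure

namespace FirstOrder.Language

theorem exists_realize_not_of_completeTheory_ne {L : Language} {A B : Type*} [L.Structure A]
    [L.Structure B] (h : L.completeTheory A ≠ L.completeTheory B) :
    ∃ ψ : L.Sentence, B ⊨ ψ ∧ A ⊨ ∼ψ := by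
  obtain ⟨φ, hφ⟩ : ∃ φ : L.Sentence, ¬(A ⊨ φ ↔ B ⊨ φ) := by
    by_contra! hcon
    exact h (elementarilyEquivalent_iff.2 hcon)
  by_cases hB : B ⊨ φ
  · exact ⟨φ, hB, (Sentence.realize_not _).2 fun hA => hφ (iff_of_true hA hB)⟩
  · refine ⟨∼φ, (Sentence.realize_not _).2 hB, ?_⟩
    simp only [Sentence.realize_not, not_not]
    tauto

theorem relMap_self_of_model_completeTheory {L : Language} {M N : Type*}
    [L.Structure M] [L.Structure N] [N ⊨ L.completeTheory M] {r : L.Relations 2}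
    (h : ∀ x : M, RelMap r ![x, x]) (x : N) : RelMap r ![x, x] :=
  (Relations.realize_reflexive.1 ((realize_iff_of_model_completeTheory M N r.reflexive).2
    (Relations.realize_reflexive.2 ⟨h⟩))).refl x

namespace Ultraproduct

variable {α : Type*} {u : Ultrafilter α} {L : Language}

theorem relMap_cast {M : α → Type*} [∀ a, L.Structure (M a)] {n : ℕ} (r : L.Relations n)
    (x : Fin n → ∀ a, M a) :
    RelMap r (fun i => (x i : (u : Filter α).Product M)) ↔
      ∀ᶠ a in (u : Filter α), RelMap r fun i => x i a :=
  relMap_quotient_mk' _ r x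

theorem relMap_cast_pair {M : α → Type*} [∀ a, L.Structure (M a)] (r : L.Relations 2)
    (b c : ∀ a, M a) :
    RelMap r ![(b : (u : Filter α).Product M), (c : (u : Filter α).Product M)] ↔
      ∀ᶠ a in (u : Filter α), RelMap r ![b a, c a] := by
  convert relMap_cast r ![b, c] using 2
  · funext i; fin_cases i <;> rfl
  · funext a; congr 1; funext i; fin_cases i <;> rfl

instance instModelProduct (T : L.Theory) (M : Type*) [L.Structure M] [Nonempty M] [M ⊨ T] :
    (u : Filter α).Product (fun _ => M) ⊨ T :=
  ⟨fun ψ hψ => (sentence_realize ψ).2 (.of_forall fun _ => Theory.realize_sentence_of_mem T hψ)⟩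

end Ultraproduct

end FirstOrder.Language

theorem mem_classSet {L : FirstOrder.Language.{0,0}} {N : Type} [L.Structure N]
    {e : L.Relations 2} {b c : N} : b ∈ classSet L e c ↔ RelMap e ![b, c] :=
  Iff.rfl

section ClassUltraproduct

variable {L : FirstOrder.Language.{0,0}} {α : Type} {u : Ultrafilter α} {N : Type}
  [L.Structure N] {e : L.Relations 2} {a : α → N}

noncomputable def classProductToClass :
    (u : Filter α).Product (fun s => classSet L e (a s)) →
      classSet L e (a : (u : Filter α).Product fun _ => N) :=
  fun k => Quotient.liftOn' k
    (fun x => ⟨((fun s => (x s : N)) : (u : Filter α).Product fun _ => N), mem_classSet.2 <|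
      (Ultraproduct.relMap_cast_pair e _ a).2 (.of_forall fun s => (x s).2)⟩)
    (fun _ _ hxy => Subtype.ext (Quotient.sound' (hxy.mono fun _ hs => congrArg Subtype.val hs)))

theorem classProductToClass_injective :
    Function.Injective (classProductToClass (u := u) (e := e) (a := a)) := by
  intro k l hkl
  induction k using Quotient.inductionOn' with | h x =>
  induction l using Quotient.inductionOn' with | h y =>
  have hxy := Quotient.exact' (congrArg Subtype.val hkl)
  exact Quotient.sound' (hxy.mono fun _ hs => Subtype.ext hs)

theorem classProductToClass_surjective (ha : ∀ s, RelMap e ![a s, a s]) :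
    Function.Surjective (classProductToClass (u := u) (e := e) (a := a)) := by
  classical
  rintro ⟨b, hb⟩
  induction b using Quotient.inductionOn' with | h g =>
  have hg : ∀ᶠ s in (u : Filter α), RelMap e ![g s, a s] :=
    (Ultraproduct.relMap_cast_pair e g a).1 hb
  refine ⟨((fun s => if h : RelMap e ![g s, a s] then ⟨g s, h⟩ else ⟨a s, ha s⟩ :
    ∀ s, classSet L e (a s)) : (u : Filter α).Product _), ?_⟩
  apply Subtype.ext
  apply Quotient.sound'
  exact hg.mono fun s hs => by simp only [dif_pos hs]

noncomputable def classProductEquiv [L.IsRelational] (ha : ∀ s, RelMap e ![a s, a s]) :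
    (u : Filter α).Product (fun s => classSet L e (a s)) ≃[L]
      classSet L e (a : (u : Filter α).Product fun _ => N) where
  toEquiv := .ofBijective classProductToClass
    ⟨classProductToClass_injective, classProductToClass_surjective ha⟩
  map_fun' f := isEmptyElim f
  map_rel' {n} r x := by
    obtain ⟨g, rfl⟩ : ∃ g : Fin n → ∀ s, classSet L e (a s),
        (fun i => (g i : (u : Filter α).Product fun s => classSet L e (a s))) = x :=
      ⟨fun i => (x i).out, funext fun i => Quotient.out_eq' (x i)⟩
    exact (Ultraproduct.relMap_cast r fun i s => (g i s : N)).trans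
      (Ultraproduct.relMap_cast r g).symm

theorem realize_classSet_cast [L.IsRelational] (ha : ∀ s, RelMap e ![a s, a s])
    (φ : L.Sentence) :
    classSet L e (a : (u : Filter α).Product fun _ => N) ⊨ φ ↔
      ∀ᶠ s in (u : Filter α), classSet L e (a s) ⊨ φ := by
  have : ∀ s, Nonempty (classSet L e (a s)) := fun s => ⟨⟨a s, ha s⟩⟩
  rw [← StrongHomClass.realize_sentence (classProductEquiv (u := u) ha) φ,
    Ultraproduct.sentence_realize]

end ClassUltraproduct

theorem exists_ultrapower_classSet_realize {L : FirstOrder.Language.{0,0}} [L.IsRelational]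
    {I N : Type} [L.Structure N] {e : L.Relations 2} (hrefl : ∀ x : N, RelMap e ![x, x])
    (ψ : I → L.Sentence) (h : ∀ s : Finset I, ∃ a : N, ∀ i ∈ s, classSet L e a ⊨ ψ i) :
    ∃ (u : Ultrafilter (Finset I)) (b : (u : Filter (Finset I)).Product fun _ => N),
      ∀ i, classSet L e b ⊨ ψ i := by
  choose a ha using h
  obtain ⟨u, hu⟩ := Ultrafilter.exists_le (Filter.atTop : Filter (Finset I))
  refine ⟨u, a, fun i => (realize_classSet_cast (fun s => hrefl (a s)) (ψ i)).2 ?_⟩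
  exact Filter.Eventually.mono (hu (Filter.eventually_ge_atTop {i})) fun s hs =>
    ha s i (hs (Finset.mem_singleton_self i))

theorem stmt10_general (L : FirstOrder.Language.{0,0}) [L.IsRelational] (M : Type) [L.Structure M]
    (e : L.Relations 2) (I : Type) (rep : I → M)
    (hrefl : ∀ a : M, Structure.RelMap e ![a, a]) :
    (∃ (N : FirstOrder.Language.Theory.ModelType.{0,0,0} (L.completeTheory M)) (a : N),
      ∀ i : I, classTheory L e a ≠ classTheory L e (rep i)) ↔
    (∃ φ : I → L.Sentence,
      (∀ i : I, classSet L e (rep i) ⊨ φ i) ∧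
      (∃ N : FirstOrder.Language.Theory.ModelType.{0,0,0} (L.completeTheory M),
        ∀ s : Finset I, ∃ a : N, ∀ i ∈ s, classSet L e a ⊨ ∼(φ i))) := by
  constructor
  · rintro ⟨N, a, h⟩
    choose φ hφ hφa using fun i => exists_realize_not_of_completeTheory_ne (h i)
    exact ⟨φ, hφ, N, fun _ => ⟨a, fun i _ => hφa i⟩⟩
  · rintro ⟨φ, hφ, N, hN⟩
    obtain ⟨u, b, hb⟩ := exists_ultrapower_classSet_realize
      (relMap_self_of_model_completeTheory hrefl) (fun i => ∼(φ i)) hN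
    refine ⟨.of _ ((u : Filter (Finset I)).Product fun _ => N), b, fun i hi => ?_⟩
    have hφb : φ i ∈ classTheory L e b := hi ▸ mem_completeTheory.2 (hφ i)
    exact (Sentence.realize_not _).1 (hb i) hφb

/-- for an `E`-combination `M` of the structures on the `E`-classes of the
elements `rep i`, the following are equivalent: (1) some model of `Th(M)` (i.e. some
`A' ≡ A_E`) has an `E`-class whose structure is not elementarily equivalent to any class of
`M`; (2) there are sentences `φ i` true in the classes of `rep i` such that each finite
conjunction of the `¬ φ i` is satisfied in some `E`-class of a single model of `Th(M)`. -/
theorem stmt10 (L : FirstOrder.Language.{0,0}) [L.IsRelational] (M : Type) [L.Structure M]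
    (e : L.Relations 2) (I : Type) (rep : I → M)
    (hrefl : ∀ a : M, Structure.RelMap e ![a, a])
    (hsymm : ∀ a b : M, Structure.RelMap e ![a, b] → Structure.RelMap e ![b, a])
    (htrans : ∀ a b c : M, Structure.RelMap e ![a, b] → Structure.RelMap e ![b, c] →
      Structure.RelMap e ![a, c])
    (hnocross : ∀ (n : ℕ) (r : L.Relations n) (x : Fin n → M), Structure.RelMap r x →
      ∀ k l : Fin n, Structure.RelMap e ![x k, x l])
    (hrep : ∀ a : M, ∃ i : I, Structure.RelMap e ![a, rep i]) :
    (∃ (N : FirstOrder.Language.Theory.ModelType.{0,0,0} (L.completeTheory M)) (a : N),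
      ∀ i : I, classTheory L e a ≠ classTheory L e (rep i)) ↔
    (∃ φ : I → L.Sentence,
      (∀ i : I, classSet L e (rep i) ⊨ φ i) ∧
      (∃ N : FirstOrder.Language.Theory.ModelType.{0,0,0} (L.completeTheory M),
        ∀ s : Finset I, ∃ a : N, ∀ i ∈ s, classSet L e a ⊨ ∼(φ i))) :=
  stmt10_general L M e I rep hrefl
end

section
/- Any weakly saturated structure A_E (i.e., one realizing all types of Th(A_E)) is e-largest: every structure occurring as an E-class of some model of Th(A_E) is elementarily equivalent to some E-class of A_E. -/
open FirstOrder Language Cardinal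

set_option autoImplicit false

/-- Relativization of a bounded formula to the `E`-class of the free variable `0`. -/
def rtv (L : FirstOrder.Language.{0,0}) (e : L.Relations 2) :
    ∀ {n : ℕ}, L.BoundedFormula Empty n → L.BoundedFormula (Fin 1) n
  | _, .falsum => .falsum
  | _, .equal t₁ t₂ => .equal (t₁.relabel (Sum.map (Empty.elim : Empty → Fin 1) id))
      (t₂.relabel (Sum.map (Empty.elim : Empty → Fin 1) id))
  | _, .rel R ts => .rel R (fun i => (ts i).relabel (Sum.map (Empty.elim : Empty → Fin 1) id))
  | _, .imp f g => .imp (rtv L e f) (rtv L e g)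
  | n, .all f => .all ((BoundedFormula.rel e
      ![Term.var (Sum.inr (Fin.last n)), Term.var (Sum.inl 0)]).imp (rtv L e f))

lemma term_rtv (L : FirstOrder.Language.{0,0}) [L.IsRelational] {N : Type} [L.Structure N]
    (e : L.Relations 2) (a : N) {n : ℕ} (t : L.Term (Empty ⊕ Fin n))
    (xs : Fin n → classSet L e a) :
    Term.realize (L := L) (M := N) (Sum.elim (fun _ : Fin 1 => a) (fun i => (xs i : N)))
      (t.relabel (Sum.map (Empty.elim : Empty → Fin 1) id)) =
      ((t.realize (Sum.elim Empty.elim xs) : classSet L e a) : N) := by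
  cases t with
  | var v => cases v with
    | inl v => exact v.elim
    | inr i => rfl
  | func f _ => exact isEmptyElim f

lemma rtv_realize (L : FirstOrder.Language.{0,0}) [L.IsRelational] {N : Type} [L.Structure N]
    (e : L.Relations 2) (a : N) :
    ∀ {n : ℕ} (φ : L.BoundedFormula Empty n) (xs : Fin n → classSet L e a),
    (rtv L e φ).Realize (M := N) (fun _ => a) (fun i => (xs i : N)) ↔
      φ.Realize Empty.elim xs := by
  intro n φ
  induction φ with
  | falsum => exact fun _ => Iff.rfl
  | equal t₁ t₂ =>
    intro xs
    show Term.realize _ (t₁.relabel _) = Term.realize _ (t₂.relabel _) ↔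
      (t₁.realize (Sum.elim Empty.elim xs) : classSet L e a) = t₂.realize (Sum.elim Empty.elim xs)
    rw [term_rtv L e a t₁ xs, term_rtv L e a t₂ xs, Subtype.coe_inj]
  | rel R ts =>
    intro xs
    show Structure.RelMap R (fun i =>
        Term.realize (Sum.elim (fun _ : Fin 1 => a) (fun i => (xs i : N)))
          ((ts i).relabel (Sum.map (Empty.elim : Empty → Fin 1) id))) ↔
      Structure.RelMap R (fun k =>
        ((Term.realize (Sum.elim Empty.elim xs) (ts k) : classSet L e a) : N))
    rw [funext fun i => term_rtv L e a (ts i) xs]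
  | imp f g ihf ihg =>
    intro xs
    exact imp_congr (ihf xs) (ihg xs)
  | all f ih =>
    intro xs
    have guard : ∀ y : N,
        (fun i => Term.realize (L := L) (M := N)
          (Sum.elim (fun _ : Fin 1 => a) (Fin.snoc (fun i => (xs i : N)) y))
          (![Term.var (Sum.inr (Fin.last _)), Term.var (Sum.inl 0)] i)) = ![y, a] := by
      intro y; funext i
      fin_cases i <;> simp [Term.realize, Fin.snoc_last]
    have coe_snoc : ∀ y : classSet L e a,
        (fun i => ((Fin.snoc xs y : Fin _ → classSet L e a) i : N)) =
          Fin.snoc (fun i => (xs i : N)) (y : N) := by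
      intro y
      exact Fin.comp_snoc (fun z : classSet L e a => (z : N)) xs y
    constructor
    · intro h y
      refine (ih (Fin.snoc xs y)).mp ?_
      have h' : Structure.RelMap e (fun i =>
            Term.realize (L := L) (M := N)
              (Sum.elim (fun _ : Fin 1 => a) (Fin.snoc (fun i => (xs i : N)) (y : N)))
              (![Term.var (Sum.inr (Fin.last _)), Term.var (Sum.inl 0)] i)) →
          (rtv L e f).Realize (fun _ => a) (Fin.snoc (fun i => (xs i : N)) (y : N)) := h (y : N)
      rw [coe_snoc y]
      apply h'
      rw [guard (y : N)]
      exact y.2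
    · intro h y hg
      have hg' : Structure.RelMap e (fun i =>
          Term.realize (L := L) (M := N)
            (Sum.elim (fun _ : Fin 1 => a) (Fin.snoc (fun i => (xs i : N)) y))
            (![Term.var (Sum.inr (Fin.last _)), Term.var (Sum.inl 0)] i)) := hg
      have hy : Structure.RelMap e ![y, a] := by rwa [guard y] at hg'
      have := (ih (Fin.snoc xs ⟨y, hy⟩)).mpr (h ⟨y, hy⟩)
      rwa [coe_snoc ⟨y, hy⟩] at this

/-- any weakly saturated `E`-combination `M` (realizing all types of `Th(M)`,
i.e. every finite tuple in a model of `Th(M)` has a tuple in `M` satisfying the same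
formulas) is `e`-largest: every structure occurring as an `E`-class of some model of `Th(M)`
is elementarily equivalent to some `E`-class of `M`. -/
theorem stmt13 (L : FirstOrder.Language.{0,0}) [L.IsRelational] (M : Type) [L.Structure M]
    (e : L.Relations 2)
    (hrefl : ∀ a : M, Structure.RelMap e ![a, a])
    (hsymm : ∀ a b : M, Structure.RelMap e ![a, b] → Structure.RelMap e ![b, a])
    (htrans : ∀ a b c : M, Structure.RelMap e ![a, b] → Structure.RelMap e ![b, c] →
      Structure.RelMap e ![a, c])
    (hnocross : ∀ (n : ℕ) (r : L.Relations n) (x : Fin n → M), Structure.RelMap r x →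
      ∀ k l : Fin n, Structure.RelMap e ![x k, x l])
    (hwsat : ∀ (n : ℕ) (N : FirstOrder.Language.Theory.ModelType.{0,0,0} (L.completeTheory M))
      (x : Fin n → N), ∃ y : Fin n → M,
        ∀ φ : L.Formula (Fin n), φ.Realize x → φ.Realize y) :
    ∀ (N : FirstOrder.Language.Theory.ModelType.{0,0,0} (L.completeTheory M)) (a : N),
      ∃ b : M, classTheory L e a = classTheory L e b := by
  intro N a
  obtain ⟨y, hy⟩ := hwsat 1 N (fun _ => a)
  refine ⟨y 0, ?_⟩
  have hy' : ∀ φ : L.Formula (Fin 1), φ.Realize (M := N) (fun _ => a) ↔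
      φ.Realize (M := M) (fun _ => y 0) := by
    intro φ
    have hyy : (fun _ : Fin 1 => y 0) = y := by
      funext i; rw [Subsingleton.elim i 0]
    rw [hyy]
    constructor
    · exact hy φ
    · intro h
      by_contra hn
      have := hy φ.not (by rwa [Formula.realize_not])
      rw [Formula.realize_not] at this
      exact this h
  have key : ∀ {P : Type} [L.Structure P] (c : P) (ψ : L.Sentence),
      ψ ∈ classTheory L e c ↔ Formula.Realize (M := P) (rtv L e ψ) (fun _ => c) := by
    intro P _ c ψ
    rw [classTheory, mem_completeTheory]
    have h := rtv_realize L e c ψ (default : Fin 0 → classSet L e c)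
    rw [show (fun i => ((default : Fin 0 → classSet L e c) i : P)) = (default : Fin 0 → P) from
      funext fun i => i.elim0] at h
    rw [show (Empty.elim : Empty → classSet L e c) = default from
      funext fun x => x.elim] at h
    exact h.symm
  ext ψ
  rw [key a ψ, key (y 0) ψ, hy' (rtv L e ψ)]
end

section
/- For any cardinal λ there is a theory T = Th(A_E) of an E-combination in a language Σ of cardinality |λ + 1| (i.e., max(λ,1)) such that e-Sp(T) = λ. Concretely, for λ > 0, take language {P_i : i < λ} of unary predicates and structures A_{i,n} with n elements, all in P_i and none in P_j (j ≠ i); then the E-combination of all A_{i,n} has e-spectrum exactly λ, witnessed by the λ pairwise non-equivalent structures with P_i infinite. -/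
/-!
In `A_E` every `E`-class is a single colour class: its points satisfy the same predicates `P_j`,
at most one of them. This is expressed by universal sentences, so it holds in every model of
`Th(A_E)`. For such a class, every bijection with another class of the same colour is an
isomorphism; hence its theory is determined by its colour and its size, and all infinite classes
of one colour are elementarily equivalent (Łoś–Vaught). Finite classes of every colour and size
and an infinite uncoloured class already occur in `A_E`, so the new class theories are those of
infinite `P_i`-classes, one for each `i`, pairwise distinct. Each of them occurs in an ultrapower
of `A_E`, as the class of a point whose coordinates run through the classes `A_{i,n}`.
-/

open FirstOrder Language Cardinal

set_option autoImplicit false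

/-- `T0` is the theory of some `E`-class of some model of `Th(M)` (i.e. of some `A' ≡ A_E`). -/
def IsClassTheory (L : FirstOrder.Language.{0,0}) [L.IsRelational] (M : Type) [L.Structure M]
    (e : L.Relations 2) (T0 : L.Theory) : Prop :=
  ∃ (N : FirstOrder.Language.Theory.ModelType.{0,0,0} (L.completeTheory M)) (a : N),
    T0 = classTheory L e a

/-- The `e`-spectrum: the number of pairwise elementarily non-equivalent structures occurring
as `E`-classes of models of `Th(M)` that are not elementarily equivalent to any of the classes
of `M` (the classes of the elements `rep i`). -/
noncomputable def eSp (L : FirstOrder.Language.{0,0}) [L.IsRelational] (M : Type)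
    [L.Structure M] (e : L.Relations 2) {I : Type} (rep : I → M) : Cardinal :=
  #{T0 : L.Theory // IsClassTheory L M e T0 ∧ ∀ i : I, T0 ≠ classTheory L e (rep i)}

namespace ECombination

open Structure

inductive Rel (α : Type) : ℕ → Type
  | color : α → Rel α 1
  | equiv : Rel α 2

def lang (α : Type) : FirstOrder.Language.{0,0} := ⟨fun _ => Empty, Rel α⟩

variable {α : Type}

instance : (lang α).IsRelational := fun _ => inferInstanceAs (IsEmpty Empty)

abbrev E (α : Type) : (lang α).Relations 2 := .equiv

abbrev P (j : α) : (lang α).Relations 1 := .color j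

def relSymbolsEquiv : (Σ n, (lang α).Relations n) ≃ α ⊕ Unit where
  toFun
    | ⟨_, .color j⟩ => .inl j
    | ⟨_, .equiv⟩ => .inr ()
  invFun
    | .inl j => ⟨1, .color j⟩
    | .inr () => ⟨2, .equiv⟩
  left_inv := by rintro ⟨_, _ | _⟩ <;> rfl
  right_inv := by rintro (_ | ⟨⟩) <;> rfl

theorem card_lang : (lang α).card = #α + 1 := by
  have : IsEmpty (Σ n, (lang α).Functions n) := ⟨fun ⟨_, f⟩ => Empty.elim f⟩
  simp [Language.card, Language.Symbols, mk_congr relSymbolsEquiv]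

structure IsUniform (S : Set α) (X : Type) [(lang α).Structure X] : Prop where
  equiv : ∀ x y : X, RelMap (E α) ![x, y]
  color : ∀ (j : α) (x : X), RelMap (P j) ![x] ↔ j ∈ S

section Uniform

variable {S S' : Set α} {X Y : Type} [(lang α).Structure X] [(lang α).Structure Y]

theorem IsUniform.unique [Nonempty X] (h : IsUniform S X) (h' : IsUniform S' X) : S = S' := by
  ext j
  rw [← h.color j (Classical.arbitrary X), h'.color]

theorem IsUniform.relMap_color (h : IsUniform S X) (j : α) (x : Fin 1 → X) :
    RelMap (P j) x ↔ j ∈ S := by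
  rw [← FinVec.etaExpand_eq x]
  exact h.color j (x 0)

theorem IsUniform.relMap_equiv (h : IsUniform S X) (x : Fin 2 → X) : RelMap (E α) x := by
  rw [← FinVec.etaExpand_eq x]
  exact h.equiv (x 0) (x 1)

def IsUniform.lequivOfEquiv (hX : IsUniform S X) (hY : IsUniform S Y) (f : X ≃ Y) :
    X ≃[lang α] Y where
  toEquiv := f
  map_rel'
    | .color j, _ => (hY.relMap_color j _).trans (hX.relMap_color j _).symm
    | .equiv, _ => iff_of_true (hY.relMap_equiv _) (hX.relMap_equiv _)

theorem IsUniform.completeTheory_eq_of_equiv (hX : IsUniform S X) (hY : IsUniform S Y)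
    (f : X ≃ Y) : (lang α).completeTheory X = (lang α).completeTheory Y :=
  (StrongHomClass.elementarilyEquivalent (hX.lequivOfEquiv hY f)).completeTheory_eq

variable (α) in
def allEquiv : (lang α).Sentence := ∀' ∀' (E α).boundedFormula₂ &0 &1

def allColor (j : α) : (lang α).Sentence := ∀' (P j).boundedFormula₁ &0

def noColor (j : α) : (lang α).Sentence := ∀' ∼((P j).boundedFormula₁ &0)

@[simp]
theorem realize_allEquiv : X ⊨ allEquiv α ↔ ∀ x y : X, RelMap (E α) ![x, y] := by
  simp [allEquiv, Sentence.Realize, Formula.Realize, Fin.snoc]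

@[simp]
theorem realize_allColor (j : α) : X ⊨ allColor j ↔ ∀ x : X, RelMap (P j) ![x] := by
  simp [allColor, Sentence.Realize, Formula.Realize, Fin.snoc]

@[simp]
theorem realize_noColor (j : α) : X ⊨ noColor j ↔ ∀ x : X, ¬RelMap (P j) ![x] := by
  simp [noColor, Sentence.Realize, Formula.Realize, Fin.snoc]

def uniformTheory (S : Set α) : (lang α).Theory :=
  insert (allEquiv α) (allColor '' S ∪ noColor '' Sᶜ) ∪ (lang α).infiniteTheory

theorem model_uniformTheory_iff : X ⊨ uniformTheory S ↔ IsUniform S X ∧ Infinite X := by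
  rw [uniformTheory, Theory.model_union_iff, model_infiniteTheory_iff, Theory.model_iff]
  simp only [Set.forall_mem_insert, Set.mem_union, or_imp, forall_and, Set.forall_mem_image,
    realize_allEquiv, realize_allColor, realize_noColor, Set.mem_compl_iff]
  refine and_congr_left fun _ => ⟨fun ⟨hE, hP, hnP⟩ => ⟨hE, fun j x => ?_⟩,
    fun h => ⟨h.equiv, fun j hj x => (h.color j x).2 hj, fun j hj x => mt (h.color j x).1 hj⟩⟩
  by_cases hj : j ∈ S
  · exact iff_of_true (hP hj x) hj
  · exact iff_of_false (hnP hj x) hj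

def UniformNat (_ : Set α) : Type := ℕ

instance (S : Set α) : (lang α).Structure (UniformNat S) where
  RelMap
    | .color j => fun _ => j ∈ S
    | .equiv => fun _ => True

instance (S : Set α) : Infinite (UniformNat S) := inferInstanceAs (Infinite ℕ)

theorem isUniform_uniformNat (S : Set α) : IsUniform S (UniformNat S) :=
  ⟨fun _ _ => trivial, fun _ _ => Iff.rfl⟩

/-- Łoś–Vaught: any bijection between two models is an isomorphism. -/
theorem isComplete_uniformTheory (S : Set α) : (uniformTheory S).IsComplete := by
  have := (model_uniformTheory_iff (X := UniformNat S)).2 ⟨isUniform_uniformNat S, inferInstance⟩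
  refine Cardinal.Categorical.isComplete (#α + ℵ₀) _ (fun X Y hX hY => ?_) le_add_self ?_
    ⟨.of _ (UniformNat S)⟩ fun X => (model_uniformTheory_iff.1 X.is_model).2
  · obtain ⟨f⟩ := Cardinal.eq.1 (hX.trans hY.symm)
    exact ⟨(model_uniformTheory_iff.1 X.is_model).1.lequivOfEquiv
      (model_uniformTheory_iff.1 Y.is_model).1 f⟩
  · rw [lift_id, lift_id, card_lang]
    gcongr
    exact one_le_aleph0

theorem IsUniform.completeTheory_eq_of_infinite [Infinite X] [Infinite Y] (hX : IsUniform S X)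
    (hY : IsUniform S Y) : (lang α).completeTheory X = (lang α).completeTheory Y := by
  have := model_uniformTheory_iff.2 ⟨hX, ‹_›⟩
  have := model_uniformTheory_iff.2 ⟨hY, ‹_›⟩
  rw [← (isComplete_uniformTheory S).eq_complete_theory X,
    (isComplete_uniformTheory S).eq_complete_theory Y]

theorem IsUniform.of_completeTheory_eq [Infinite X] (hX : IsUniform S X)
    (h : (lang α).completeTheory X = (lang α).completeTheory Y) : IsUniform S Y ∧ Infinite Y := by
  have := model_uniformTheory_iff.2 ⟨hX, ‹_›⟩
  exact model_uniformTheory_iff.1 (ElementarilyEquivalent.theory_model h)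

end Uniform

section Classes

theorem relMap_classSet_pair {L : FirstOrder.Language.{0,0}} [L.IsRelational] {N : Type}
    [L.Structure N] (e r : L.Relations 2) (a : N) (x y : classSet L e a) :
    RelMap r ![x, y] ↔ RelMap r ![(x : N), y] := by
  show RelMap r (Subtype.val ∘ ![x, y]) ↔ _
  rw [← FinVec.map_eq]
  rfl

theorem relMap_classSet_single {L : FirstOrder.Language.{0,0}} [L.IsRelational] {N : Type}
    [L.Structure N] (e : L.Relations 2) (r : L.Relations 1) (a : N) (x : classSet L e a) :
    RelMap r ![x] ↔ RelMap r ![(x : N)] := by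
  show RelMap r (Subtype.val ∘ ![x]) ↔ _
  rw [← FinVec.map_eq]
  rfl

variable {N : Type} [(lang α).Structure N]

theorem isUniform_classSet (hE : Equivalence fun x y : N => RelMap (E α) ![x, y])
    (hP : ∀ (j : α) (x y : N), RelMap (E α) ![x, y] → RelMap (P j) ![x] → RelMap (P j) ![y])
    (a : N) : IsUniform {j : α | RelMap (P j) ![a]} (classSet (lang α) (E α) a) where
  equiv x y := (relMap_classSet_pair _ _ a x y).2 (hE.trans x.2 (hE.symm y.2))
  color j x := (relMap_classSet_single _ _ a x).trans ⟨hP j x a x.2, hP j a x (hE.symm x.2)⟩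

end Classes

section Combination

/-- `inl (S, n)` is a class of `n + 1` points coloured by `S`, which is `{i}` (the structure
`A_{i,n+1}`) or `∅`; `inr ()` is one infinite uncoloured class. The uncoloured classes are there so
that every finite or uncoloured class of a model of `Th(A_E)` already occurs in `A_E` (this also
handles `λ = 0`). -/
abbrev ClassIndex (α : Type) : Type := {S : Set α // S.Subsingleton} × ℕ ⊕ Unit

def ClassIndex.color : ClassIndex α → Set α
  | .inl (S, _) => S
  | .inr _ => ∅

theorem ClassIndex.subsingleton_color : ∀ c : ClassIndex α, c.color.Subsingleton
  | .inl (S, _) => S.2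
  | .inr _ => Set.subsingleton_empty

def ClassIndex.Carrier : ClassIndex α → Type
  | .inl (_, n) => Fin (n + 1)
  | .inr _ => ℕ

instance : (c : ClassIndex α) → Inhabited c.Carrier
  | .inl (_, n) => inferInstanceAs (Inhabited (Fin (n + 1)))
  | .inr _ => inferInstanceAs (Inhabited ℕ)

def Combination (α : Type) : Type := Σ c : ClassIndex α, c.Carrier

instance : (lang α).Structure (Combination α) where
  RelMap
    | .color j => fun x => j ∈ (x 0).1.color
    | .equiv => fun x => (x 0).1 = (x 1).1

def rep (c : ClassIndex α) : Combination α := ⟨c, default⟩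

theorem equivalence_combination :
    Equivalence fun x y : Combination α => RelMap (E α) ![x, y] :=
  ⟨fun _ => rfl, Eq.symm, Eq.trans⟩

theorem relMap_combination_equiv (x y : Combination α) : RelMap (E α) ![x, y] ↔ x.1 = y.1 :=
  Iff.rfl

theorem relMap_combination_color (j : α) (x : Combination α) :
    RelMap (P j) ![x] ↔ j ∈ x.1.color :=
  Iff.rfl

theorem relMap_combination_color_of_equiv (j : α) (x y : Combination α)
    (h : RelMap (E α) ![x, y]) (hx : RelMap (P j) ![x]) : RelMap (P j) ![y] := by
  rw [relMap_combination_color] at hx ⊢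
  rw [relMap_combination_equiv] at h
  rwa [← h]

theorem equiv_of_relMap_combination {n : ℕ} (r : (lang α).Relations n) (x : Fin n → Combination α)
    (h : RelMap r x) (k l : Fin n) : RelMap (E α) ![x k, x l] := by
  cases r with
  | color j => exact congrArg (fun m => (x m).1) (Subsingleton.elim k l)
  | equiv =>
    have hx : ∀ m, (x m).1 = (x 0).1 := by
      intro m
      fin_cases m
      exacts [rfl, (h : (x 0).1 = (x 1).1).symm]
    exact (hx k).trans (hx l).symm

def classSetRepEquiv (c : ClassIndex α) : classSet (lang α) (E α) (rep c) ≃ c.Carrier where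
  toFun x := (show x.1.1 = c from x.2) ▸ x.1.2
  invFun y := ⟨⟨c, y⟩, rfl⟩
  left_inv := by
    rintro ⟨⟨c', y⟩, h : c' = c⟩
    subst h
    rfl
  right_inv _ := rfl

theorem isUniform_classSet_rep (c : ClassIndex α) :
    IsUniform c.color (classSet (lang α) (E α) (rep c)) :=
  isUniform_classSet equivalence_combination relMap_combination_color_of_equiv (rep c)

instance : Infinite (classSet (lang α) (E α) (rep (α := α) (.inr ()))) :=
  (classSetRepEquiv (.inr ())).infinite_iff.2 (inferInstanceAs (Infinite ℕ))

end Combination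

section Models

def colorInvariant (j : α) : (lang α).Sentence :=
  ∀' ∀' ((E α).boundedFormula₂ &0 &1 ⟹ (P j).boundedFormula₁ &0 ⟹ (P j).boundedFormula₁ &1)

def colorDisjoint (i j : α) : (lang α).Sentence :=
  ∀' ∼((P i).boundedFormula₁ &0 ⊓ (P j).boundedFormula₁ &0)

variable {N : Type} [(lang α).Structure N]

@[simp]
theorem realize_colorInvariant (j : α) :
    N ⊨ colorInvariant j ↔
      ∀ x y : N, RelMap (E α) ![x, y] → RelMap (P j) ![x] → RelMap (P j) ![y] := by
  simp [colorInvariant, Sentence.Realize, Formula.Realize, Fin.snoc]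

@[simp]
theorem realize_colorDisjoint (i j : α) :
    N ⊨ colorDisjoint i j ↔ ∀ x : N, ¬(RelMap (P i) ![x] ∧ RelMap (P j) ![x]) := by
  simp [colorDisjoint, Sentence.Realize, Formula.Realize, Fin.snoc]

variable [N ⊨ (lang α).completeTheory (Combination α)]

theorem realize_of_combination {φ : (lang α).Sentence} (h : Combination α ⊨ φ) : N ⊨ φ :=
  (realize_iff_of_model_completeTheory _ _ φ).2 h

theorem equivalence_of_model : Equivalence fun x y : N => RelMap (E α) ![x, y] :=
  have hE := equivalence_combination (α := α)
  ⟨(Relations.realize_reflexive.1 (realize_of_combination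
      (Relations.realize_reflexive.2 ⟨hE.refl⟩))).refl,
    (Relations.realize_symmetric.1 (realize_of_combination
      (Relations.realize_symmetric.2 ⟨fun _ _ => hE.symm⟩))).symm _ _,
    (Relations.realize_transitive.1 (realize_of_combination
      (Relations.realize_transitive.2 ⟨fun _ _ _ => hE.trans⟩))).trans _ _ _⟩

theorem relMap_color_of_equiv_of_model (j : α) (x y : N) :
    RelMap (E α) ![x, y] → RelMap (P j) ![x] → RelMap (P j) ![y] :=
  (realize_colorInvariant j).1
    (realize_of_combination ((realize_colorInvariant j).2 (relMap_combination_color_of_equiv j)))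
    x y

theorem subsingleton_colors_of_model (a : N) : {j : α | RelMap (P j) ![a]}.Subsingleton := by
  intro i hi j hj
  by_contra hij
  have hdisj : Combination α ⊨ colorDisjoint i j :=
    (realize_colorDisjoint (N := Combination α) i j).2 fun x hx =>
      hij (x.1.subsingleton_color hx.1 hx.2)
  exact (realize_colorDisjoint i j).1 (realize_of_combination hdisj) a ⟨hi, hj⟩

theorem isUniform_classSet_of_model (a : N) :
    IsUniform {j : α | RelMap (P j) ![a]} (classSet (lang α) (E α) a) :=
  isUniform_classSet equivalence_of_model relMap_color_of_equiv_of_model a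

theorem classTheory_of_model (a : N) :
    classTheory (lang α) (E α) a ∈
        Set.range (fun c : ClassIndex α => classTheory (lang α) (E α) (rep c)) ∨
      ∃ i : α, classTheory (lang α) (E α) a = (lang α).completeTheory (UniformNat {i}) := by
  have hC := isUniform_classSet_of_model (α := α) a
  have hS := subsingleton_colors_of_model (α := α) a
  have : Nonempty (classSet (lang α) (E α) a) := ⟨⟨a, (equivalence_of_model (α := α)).refl a⟩⟩
  rcases finite_or_infinite (classSet (lang α) (E α) a) with hfin | hinf
  · obtain ⟨n, ⟨f⟩⟩ := Finite.exists_equiv_fin (classSet (lang α) (E α) a)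
    obtain _ | m := n
    · exact (f (Classical.arbitrary _)).elim0
    exact .inl ⟨.inl (⟨_, hS⟩, m), ((isUniform_classSet_rep _).completeTheory_eq_of_equiv hC
      ((classSetRepEquiv _).trans f.symm))⟩
  · rcases hS.eq_empty_or_singleton with h | ⟨i, h⟩ <;> rw [h] at hC
    · exact .inl ⟨.inr (), (isUniform_classSet_rep _).completeTheory_eq_of_infinite hC⟩
    · exact .inr ⟨i, hC.completeTheory_eq_of_infinite (isUniform_uniformNat _)⟩

end Models

theorem completeTheory_uniformNat_injective :
    Function.Injective fun i : α => (lang α).completeTheory (UniformNat {i}) := fun i j h =>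
  Set.singleton_injective
    (((isUniform_uniformNat {i}).of_completeTheory_eq h).1.unique (isUniform_uniformNat {j}))

theorem completeTheory_uniformNat_ne_classTheory_rep (i : α) (c : ClassIndex α) :
    (lang α).completeTheory (UniformNat {i}) ≠ classTheory (lang α) (E α) (rep c) := by
  intro h
  obtain ⟨hU, hinf⟩ := (isUniform_uniformNat {i}).of_completeTheory_eq h
  have : Nonempty (classSet (lang α) (E α) (rep c)) := ⟨⟨rep c, rfl⟩⟩
  rcases c with ⟨S, n⟩ | ⟨⟩
  · have : Finite (classSet (lang α) (E α) (rep (.inl (S, n)))) :=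
      (classSetRepEquiv _).finite_iff.2 (inferInstanceAs (Finite (Fin (n + 1))))
    exact not_finite (classSet (lang α) (E α) (rep (.inl (S, n))))
  · exact Set.singleton_ne_empty i (hU.unique (isUniform_classSet_rep (.inr ())))

section Ultraproduct

variable {L : FirstOrder.Language.{0,0}} {ι : Type} {u : Ultrafilter ι} {M : ι → Type}
  [∀ i, L.Structure (M i)]

theorem relMap_ultraproduct_pair (r : L.Relations 2) (f g : ∀ i, M i) :
    RelMap r ![(⟦f⟧ : (u : Filter ι).Product M), ⟦g⟧] ↔ ∀ᶠ i in (u : Filter ι),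
      RelMap r ![f i, g i] := by
  have h := relMap_quotient_mk' (L := L) ((u : Filter ι).productSetoid M) r ![f, g]
  rw [← FinVec.etaExpand_eq fun k => (⟦![f, g] k⟧ : (u : Filter ι).Product M)] at h
  refine h.trans (Filter.eventually_congr (.of_forall fun i => ?_))
  rw [← FinVec.etaExpand_eq fun k => ![f, g] k i]
  rfl

theorem relMap_ultraproduct_single (r : L.Relations 1) (f : ∀ i, M i) :
    RelMap r ![(⟦f⟧ : (u : Filter ι).Product M)] ↔ ∀ᶠ i in (u : Filter ι), RelMap r ![f i] := by
  have h := relMap_quotient_mk' (L := L) ((u : Filter ι).productSetoid M) r ![f]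
  rw [← FinVec.etaExpand_eq fun k => (⟦![f] k⟧ : (u : Filter ι).Product M)] at h
  refine h.trans (Filter.eventually_congr (.of_forall fun i => ?_))
  rw [← FinVec.etaExpand_eq fun k => ![f] k i]
  rfl

end Ultraproduct

section Ultrapower

abbrev Ultrapower (α : Type) : Type :=
  ((Filter.hyperfilter ℕ : Ultrafilter ℕ) : Filter ℕ).Product fun _ => Combination α

instance : Nonempty (Combination α) := ⟨rep (.inr ())⟩

instance : Ultrapower α ⊨ (lang α).completeTheory (Combination α) :=
  (Theory.model_iff _).2 fun φ hφ =>
    (Ultraproduct.sentence_realize φ).2 (.of_forall fun _ => mem_completeTheory.1 hφ)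

/-- Point `min k n` of the `P_i`-class of size `n + 1`: for distinct `k` these sequences are
eventually distinct, so they give infinitely many points of one `P_i`-class of the ultrapower. -/
def colorSeq (i : α) (k n : ℕ) : Combination α :=
  ⟨.inl (⟨{i}, Set.subsingleton_singleton⟩, n), ⟨min k n, Nat.lt_succ_of_le (min_le_right k n)⟩⟩

noncomputable def ultraPoint (i : α) (k : ℕ) : Ultrapower α := ⟦colorSeq i k⟧

theorem ultraPoint_injective (i : α) : Function.Injective (ultraPoint i) := by
  intro k l h
  have hge : ∀ᶠ n in (Filter.hyperfilter ℕ : Filter ℕ), max k l ≤ n :=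
    Filter.hyperfilter_le_cofinite (Nat.cofinite_eq_atTop ▸ Filter.eventually_ge_atTop _)
  obtain ⟨n, hkl, hn⟩ := ((Quotient.exact h).and hge).exists
  have : min k n = min l n := by
    injection (hkl : colorSeq i k n = colorSeq i l n) with _ h'
    exact congrArg Fin.val h'
  omega

theorem classTheory_ultraPoint (i : α) :
    classTheory (lang α) (E α) (ultraPoint i 0) = (lang α).completeTheory (UniformNat {i}) := by
  have hC := isUniform_classSet_of_model (α := α) (ultraPoint i 0)
  have hcolor : {j : α | RelMap (P j) ![ultraPoint i 0]} = {i} := by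
    ext j
    exact (relMap_ultraproduct_single (u := Filter.hyperfilter ℕ) (P j) (colorSeq i 0)).trans
      Filter.eventually_const
  have hmem (k : ℕ) : ultraPoint i k ∈ classSet (lang α) (E α) (ultraPoint i 0) :=
    (relMap_ultraproduct_pair (u := Filter.hyperfilter ℕ) (E α) (colorSeq i k) (colorSeq i 0)).2
      (.of_forall fun _ => rfl)
  have : Infinite (classSet (lang α) (E α) (ultraPoint i 0)) :=
    .of_injective (fun k => ⟨ultraPoint i k, hmem k⟩) fun k l h =>
      ultraPoint_injective i (congrArg Subtype.val h)
  rw [hcolor] at hC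
  exact hC.completeTheory_eq_of_infinite (isUniform_uniformNat _)

theorem isClassTheory_uniformNat (i : α) :
    IsClassTheory (lang α) (Combination α) (E α) ((lang α).completeTheory (UniformNat {i})) :=
  ⟨.of _ (Ultrapower α), ultraPoint i 0, (classTheory_ultraPoint i).symm⟩

end Ultrapower

theorem eSp_combination : eSp (lang α) (Combination α) (E α) rep = #α := by
  have hnew : {T | IsClassTheory (lang α) (Combination α) (E α) T ∧
      ∀ c : ClassIndex α, T ≠ classTheory (lang α) (E α) (rep c)} =
      Set.range fun i : α => (lang α).completeTheory (UniformNat {i}) := by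
    ext T
    constructor
    · rintro ⟨⟨N, a, rfl⟩, hne⟩
      rcases classTheory_of_model (α := α) a with ⟨c, hc⟩ | ⟨i, hi⟩
      · exact absurd hc.symm (hne c)
      · exact ⟨i, hi.symm⟩
    · rintro ⟨i, rfl⟩
      exact ⟨isClassTheory_uniformNat i, completeTheory_uniformNat_ne_classTheory_rep i⟩
  exact (congrArg (fun s : Set (lang α).Theory => #s) hnew).trans
    (mk_range_eq _ completeTheory_uniformNat_injective)

end ECombination

/-- for any cardinal `λ` there is a theory `T = Th(A_E)` of an `E`-combination
in a language of cardinality `|λ + 1|` whose `e`-spectrum equals `λ`. -/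
theorem stmt15 (lam : Cardinal.{0}) :
    ∃ (L : FirstOrder.Language.{0,0}) (hR : L.IsRelational) (M : Type) (S : L.Structure M)
      (e : L.Relations 2) (I : Type) (rep : I → M),
      (∀ a : M, S.RelMap e ![a, a]) ∧
      (∀ a b : M, S.RelMap e ![a, b] → S.RelMap e ![b, a]) ∧
      (∀ a b c : M, S.RelMap e ![a, b] → S.RelMap e ![b, c] → S.RelMap e ![a, c]) ∧
      (∀ (n : ℕ) (r : L.Relations n) (x : Fin n → M), S.RelMap r x →
        ∀ k l : Fin n, S.RelMap e ![x k, x l]) ∧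
      (∀ a : M, ∃ i : I, S.RelMap e ![a, rep i]) ∧
      L.card = lam + 1 ∧
      @eSp L hR M S e I rep = lam := by
  have hE := ECombination.equivalence_combination (α := lam.out)
  refine ⟨ECombination.lang lam.out, inferInstance, ECombination.Combination lam.out,
    inferInstance, ECombination.E lam.out, ECombination.ClassIndex lam.out, ECombination.rep,
    hE.refl, fun _ _ => hE.symm, fun _ _ _ => hE.trans,
    fun _ => ECombination.equiv_of_relMap_combination, fun a => ⟨a.1, rfl⟩, ?_, ?_⟩
  · rw [ECombination.card_lang, mk_out]
  · rw [ECombination.eSp_combination, mk_out]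
end

section
/- For any infinite cardinal λ there is a theory T = Th(A_E) of an E-combination in a language Σ with |Σ| = λ such that e-Sp(T) = 2^λ. -/
open FirstOrder Language Cardinal

set_option autoImplicit false

/-! In `FinsetClasses J` the `E`-class indexed by a finite `s ⊆ J` has exactly the singletons
`R j`, `j ∈ s`, nonempty. For an arbitrary `T ⊆ J`, Łoś's theorem in an ultrapower along an
ultrafilter on the finite subsets of `T` refining `atTop` produces an `E`-class in which exactly the
`R j` with `j ∈ T` are nonempty, and the sentences `∃ x, R j x` recover `T` from its theory.
Taking `J = K ⊕ K` and padding each `S ⊆ K` to the infinite set `inl '' S ∪ range inr` gives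
`2 ^ |K|` distinct class theories, none of which is the theory of a class of the model itself;
on the other hand there are at most `2 ^ |K|` theories in a language of size `|K|`. -/
namespace ESpectrum

open Structure Filter

section General

variable {L : FirstOrder.Language.{0,0}}

def existsRel (R : L.Relations 1) : L.Sentence :=
  ∃' R.boundedFormula₁ &0

def existsRelInClass (e : L.Relations 2) (R : L.Relations 1) : L.Formula Unit :=
  ∃' (e.boundedFormula₂ &0 (Term.var (Sum.inl ())) ⊓ R.boundedFormula₁ &0)

theorem realize_existsRelInClass {N : Type} [L.Structure N] (e : L.Relations 2)
    (R : L.Relations 1) (a : N) :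
    (existsRelInClass e R).Realize (fun _ => a) ↔ ∃ b, RelMap e ![b, a] ∧ RelMap R ![b] := by
  simp only [existsRelInClass, Formula.Realize, BoundedFormula.realize_ex,
    BoundedFormula.realize_inf, BoundedFormula.realize_rel₁, BoundedFormula.realize_rel₂]
  rfl

theorem existsRel_mem_classTheory_iff [L.IsRelational] {N : Type} [L.Structure N]
    (e : L.Relations 2) (R : L.Relations 1) (a : N) :
    existsRel R ∈ classTheory L e a ↔ (existsRelInClass e R).Realize (fun _ => a) := by
  have hR (b : classSet L e a) : RelMap R ![b] ↔ RelMap R ![(b : N)] := by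
    change RelMap R (fun k => ((![b] k : classSet L e a) : N)) ↔ _
    rw [show (fun k => ((![b] k : classSet L e a) : N)) = ![(b : N)] from
      funext fun k => by fin_cases k; rfl]
  have : classSet L e a ⊨ existsRel R ↔ ∃ b : classSet L e a, RelMap R ![b] := by
    simp only [existsRel, Sentence.Realize, Formula.Realize, BoundedFormula.realize_ex,
      BoundedFormula.realize_rel₁]
    rfl
  rw [classTheory, mem_completeTheory, this, realize_existsRelInClass]
  simp only [hR]
  exact ⟨fun ⟨b, hb⟩ => ⟨b, b.2, hb⟩, fun ⟨b, hea, hb⟩ => ⟨⟨b, hea⟩, hb⟩⟩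

theorem existsRel_mem_classTheory_ultraproduct [L.IsRelational] {α : Type} {u : Ultrafilter α}
    {M : α → Type} [∀ i, L.Structure (M i)] [∀ i, Nonempty (M i)] (e : L.Relations 2)
    (R : L.Relations 1) (x : ∀ i, M i) :
    existsRel R ∈ classTheory L e (x : (u : Filter α).Product M) ↔
      ∀ᶠ i in u, existsRel R ∈ classTheory L e (x i) := by
  simp only [existsRel_mem_classTheory_iff]
  exact Ultraproduct.realize_formula_cast _ (fun _ => x)

instance model_completeTheory_ultrapower {α : Type} (u : Ultrafilter α) (M : Type)
    [L.Structure M] [Nonempty M] :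
    (L.completeTheory M).Model ((u : Filter α).Product fun _ => M) :=
  ⟨fun _ hφ => Ultraproduct.sentence_realize _ |>.2 <|
    .of_forall fun _ => mem_completeTheory.1 hφ⟩

end General

section FinsetClasses

variable {J : Type}

def rel (J : Type) : ℕ → Type
  | 1 => J
  | 2 => Unit
  | _ => Empty

def lang (J : Type) : FirstOrder.Language.{0,0} := ⟨fun _ => Empty, rel J⟩

instance : (lang J).IsRelational := fun _ => inferInstanceAs (IsEmpty Empty)

def E (J : Type) : (lang J).Relations 2 := ()

def R (j : J) : (lang J).Relations 1 := j

/-- The `E`-class indexed by `s` is `{s} × Option J`; in it `R j` is `{(s, some j)}` if `j ∈ s`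
and empty otherwise. -/
abbrev FinsetClasses (J : Type) := Finset J × Option J

instance : (lang J).Structure (FinsetClasses J) where
  funMap f := Empty.elim f
  RelMap {n} r x := match n, r with
    | 1, j => (x 0).2 = some j ∧ j ∈ (x 0).1
    | 2, _ => (x 0).1 = (x 1).1

theorem relMap_E (a b : FinsetClasses J) : RelMap (E J) ![a, b] ↔ a.1 = b.1 := Iff.rfl

theorem relMap_R (j : J) (a : FinsetClasses J) :
    RelMap (R j) ![a] ↔ a.2 = some j ∧ j ∈ a.1 := Iff.rfl

theorem relMap_E_of_relMap {n : ℕ} (r : (lang J).Relations n) (x : Fin n → FinsetClasses J)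
    (hr : RelMap r x) (k l : Fin n) : RelMap (E J) ![x k, x l] := by
  rw [relMap_E]
  match n, r with
  | 1, _ => rw [Subsingleton.elim k l]
  | 2, _ => fin_cases k <;> fin_cases l <;> first | rfl | exact hr | exact hr.symm

theorem existsRel_mem_classTheory_iff_mem (j : J) (a : FinsetClasses J) :
    existsRel (R j) ∈ classTheory (lang J) (E J) a ↔ j ∈ a.1 := by
  simp only [existsRel_mem_classTheory_iff, realize_existsRelInClass, relMap_E, relMap_R]
  exact ⟨fun ⟨b, hb, _, hj⟩ => hb ▸ hj, fun hj => ⟨(a.1, some j), rfl, rfl, hj⟩⟩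

end FinsetClasses

section Generic

variable {J : Type}

noncomputable def genericUltrafilter (T : Set J) : Ultrafilter (Finset T) := .of atTop

theorem eventually_mem_map_subtype_iff (T : Set J) (j : J) :
    (∀ᶠ t : Finset T in genericUltrafilter T, j ∈ t.map (.subtype (· ∈ T))) ↔ j ∈ T := by
  refine ⟨fun h => ?_, fun hj => ?_⟩
  · obtain ⟨t, ht⟩ := h.exists
    obtain ⟨i, -, rfl⟩ := Finset.mem_map.1 ht
    exact i.2
  · refine Ultrafilter.of_le _ <| (eventually_ge_atTop {⟨j, hj⟩}).mono fun t ht => ?_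
    exact Finset.mem_map_of_mem _ (ht (Finset.mem_singleton_self _))

abbrev GenericModel (T : Set J) : Type :=
  (genericUltrafilter T : Filter (Finset T)).Product fun _ => FinsetClasses J

noncomputable def genericPoint (T : Set J) : GenericModel T :=
  ((fun t => (t.map (.subtype (· ∈ T)), none)) : Finset T → FinsetClasses J)

theorem existsRel_mem_classTheory_genericPoint (T : Set J) (j : J) :
    existsRel (R j) ∈ classTheory (lang J) (E J) (genericPoint T) ↔ j ∈ T :=
  (existsRel_mem_classTheory_ultraproduct _ _ _).trans <| by
    simpa only [existsRel_mem_classTheory_iff_mem] using eventually_mem_map_subtype_iff T j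

theorem classTheory_genericPoint_injective :
    Function.Injective fun T : Set J => classTheory (lang J) (E J) (genericPoint T) := by
  intro T T' h
  ext j
  rw [← existsRel_mem_classTheory_genericPoint T, ← existsRel_mem_classTheory_genericPoint T']
  exact Iff.of_eq (congrArg (existsRel (R j) ∈ ·) h)

theorem classTheory_genericPoint_ne {T : Set J} (hT : T.Infinite) (a : FinsetClasses J) :
    classTheory (lang J) (E J) (genericPoint T) ≠ classTheory (lang J) (E J) a := by
  intro h
  obtain ⟨j, hjT, hja⟩ := (hT.sdiff a.1.finite_toSet).nonempty
  rw [← existsRel_mem_classTheory_genericPoint T, h, existsRel_mem_classTheory_iff_mem] at hjT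
  exact hja hjT

end Generic

section Cardinality

theorem card_theory_le (L : FirstOrder.Language.{0,0}) : #L.Theory ≤ 2 ^ max ℵ₀ L.card := by
  rw [mk_set]
  refine power_le_power_left two_ne_zero ?_
  have h : #L.Sentence ≤ #(Σ n, L.BoundedFormula Empty n) :=
    mk_le_of_injective (f := fun φ => ⟨0, φ⟩) fun _ _ h => by cases h; rfl
  simpa using h.trans BoundedFormula.card_le

def sigmaRelationsEquiv (J : Type) : (Σ n, (lang J).Relations n) ≃ J ⊕ Unit where
  toFun
    | ⟨1, j⟩ => .inl j
    | ⟨2, _⟩ => .inr ()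
  invFun
    | .inl j => ⟨1, j⟩
    | .inr _ => ⟨2, ()⟩
  left_inv
    | ⟨1, _⟩ => rfl
    | ⟨2, _⟩ => rfl
  right_inv
    | .inl _ => rfl
    | .inr _ => rfl

theorem card_lang (J : Type) : (lang J).card = #J + 1 := by
  have : IsEmpty (Σ n, (lang J).Functions n) := ⟨fun f => f.2.elim⟩
  simp [Language.card, Language.Symbols, mk_congr (sigmaRelationsEquiv J)]

def padded {K : Type} (S : Set K) : Set (K ⊕ K) :=
  Sum.inl '' S ∪ Set.range Sum.inr

theorem padded_injective {K : Type} : Function.Injective (padded (K := K)) := by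
  intro S S' h
  ext k
  simpa [padded] using Set.ext_iff.1 h (.inl k)

theorem padded_infinite {K : Type} [Infinite K] (S : Set K) : (padded S).Infinite :=
  (Set.infinite_range_of_injective Sum.inr_injective).mono Set.subset_union_right

end Cardinality

end ESpectrum

open ESpectrum

/-- for any infinite cardinal `λ` there is a theory `T = Th(A_E)` of an
`E`-combination in a language `Σ` with `|Σ| = λ` whose `e`-spectrum equals `2 ^ λ`. -/
theorem stmt16 (lam : Cardinal.{0}) (hlam : ℵ₀ ≤ lam) :
    ∃ (L : FirstOrder.Language.{0,0}) (hR : L.IsRelational) (M : Type) (S : L.Structure M)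
      (e : L.Relations 2) (I : Type) (rep : I → M),
      (∀ a : M, S.RelMap e ![a, a]) ∧
      (∀ a b : M, S.RelMap e ![a, b] → S.RelMap e ![b, a]) ∧
      (∀ a b c : M, S.RelMap e ![a, b] → S.RelMap e ![b, c] → S.RelMap e ![a, c]) ∧
      (∀ (n : ℕ) (r : L.Relations n) (x : Fin n → M), S.RelMap r x →
        ∀ k l : Fin n, S.RelMap e ![x k, x l]) ∧
      (∀ a : M, ∃ i : I, S.RelMap e ![a, rep i]) ∧
      L.card = lam ∧
      @eSp L hR M S e I rep = 2 ^ lam := by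
  obtain ⟨K, rfl⟩ : ∃ K : Type, #K = lam := ⟨lam.out, mk_out lam⟩
  have : Infinite K := infinite_iff.2 hlam
  have hcard : (lang (K ⊕ K)).card = #K := by
    rw [card_lang, mk_sum, lift_id, add_eq_self hlam, add_one_eq hlam]
  refine ⟨lang (K ⊕ K), inferInstance, FinsetClasses (K ⊕ K), inferInstance, E _,
    FinsetClasses (K ⊕ K), id, fun _ => rfl, fun _ _ => Eq.symm, fun _ _ _ => Eq.trans,
    fun _ => relMap_E_of_relMap, fun a => ⟨a, rfl⟩, hcard, le_antisymm ?_ ?_⟩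
  · refine (mk_subtype_le _).trans ((card_theory_le _).trans_eq ?_)
    rw [hcard, max_eq_right hlam]
  · rw [← mk_set]
    refine mk_le_of_injective (f := fun S : Set K =>
      ⟨classTheory _ (E _) (genericPoint (padded S)), ⟨⟨GenericModel (padded S)⟩, _, rfl⟩,
        classTheory_genericPoint_ne (padded_infinite S)⟩)
      fun _ _ h => padded_injective (classTheory_genericPoint_injective (congrArg Subtype.val h))
end

section
/- For any countable theory T = Th(A_P) of a P-combination: e-Sp(T) ≤ I(T,ω); if T is ω-categorical then e-Sp(T) = 0; and if T is Ehrenfeucht then e-Sp(T) < I(T,ω). -/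
open FirstOrder Language Cardinal

set_option autoImplicit false

/-- The set of realizations of `p_∞(x) = {¬ P i (x) : i ∈ I}` in a structure `N`. -/
def pInfSet (L : FirstOrder.Language.{0,0}) {I : Type} (P : I → L.Relations 1)
    (N : Type) [L.Structure N] : Set N :=
  {a | ∀ i : I, ¬ Structure.RelMap (P i) ![a]}

noncomputable instance (L : FirstOrder.Language.{0,0}) [L.IsRelational] {I : Type}
    (P : I → L.Relations 1) (N : Type) [L.Structure N] : L.Structure (pInfSet L P N) :=
  subStructure L N (pInfSet L P N)

/-- The `e`-spectrum of the theory of a `P`-combination: the number of pairwise elementarily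
non-equivalent nonempty restrictions of countable models of the theory to the realizations of
`p_∞(x)`. -/
noncomputable def eSpP (L : FirstOrder.Language.{0,0}) [L.IsRelational] {I : Type}
    (P : I → L.Relations 1) (T : L.Theory) : Cardinal :=
  #{T0 : L.Theory // ∃ N : FirstOrder.Language.Theory.ModelType.{0,0,0} T,
    Countable N ∧ (pInfSet L P N).Nonempty ∧ T0 = L.completeTheory (pInfSet L P N.1)}

/-!
Isomorphic models have isomorphic, hence elementarily equivalent, `p_∞`-parts, so the theory of
the `p_∞`-part (or "empty") is an isomorphism invariant of countable models of `T`. Its values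
cover the whole `e`-spectrum and also "empty": a countable elementary substructure of `M` omits
`p_∞`, because the `P i` cover `M`. Hence `e-Sp(T) + 1 ≤ I(T, ω)`, which gives all three claims.
-/

section PInf

variable (L : FirstOrder.Language.{0,0}) {I : Type} (P : I → L.Relations 1)

theorem map_mem_pInfSet_iff {N N' : Type} [L.Structure N] [L.Structure N'] (f : N ↪[L] N')
    (a : N) : f a ∈ pInfSet L P N' ↔ a ∈ pInfSet L P N := by
  have hvec : ![f a] = f ∘ ![a] := by
    funext k
    fin_cases k
    rfl
  simp only [pInfSet, Set.mem_ofPred_eq, hvec, f.map_rel]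

theorem pInfSet_eq_empty_iff (N : Type) [L.Structure N] :
    pInfSet L P N = ∅ ↔ ∀ a : N, ∃ i, Structure.RelMap (P i) ![a] := by
  simp [pInfSet, Set.eq_empty_iff_forall_notMem]

theorem pInfSet_eq_empty_of_embedding {N N' : Type} [L.Structure N] [L.Structure N']
    (f : N ↪[L] N') (h : pInfSet L P N' = ∅) : pInfSet L P N = ∅ :=
  Set.eq_empty_iff_forall_notMem.2 fun a ha =>
    h.subset ((map_mem_pInfSet_iff L P f a).2 ha)

variable [L.IsRelational]

noncomputable def pInfEquiv {N N' : Type} [L.Structure N] [L.Structure N'] (g : N ≃[L] N') :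
    pInfSet L P N ≃[L] pInfSet L P N' :=
  { g.toEquiv.subtypeEquiv fun a => (map_mem_pInfSet_iff L P g.toEmbedding a).symm with
    map_fun' := fun f => isEmptyElim f
    map_rel' := fun r x => g.map_rel r fun k => (x k : N) }

noncomputable def pInfTheory (N : Type) [L.Structure N] : Option L.Theory :=
  open Classical in
  if (pInfSet L P N).Nonempty then some (L.completeTheory (pInfSet L P N)) else none

theorem pInfTheory_eq_of_equiv {N N' : Type} [L.Structure N] [L.Structure N'] (g : N ≃[L] N') :
    pInfTheory L P N = pInfTheory L P N' := by
  have hne : (pInfSet L P N).Nonempty ↔ (pInfSet L P N').Nonempty :=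
    Set.nonempty_coe_sort.symm.trans
      ((pInfEquiv L P g).toEquiv.nonempty_congr.trans Set.nonempty_coe_sort)
  have hth : L.completeTheory (pInfSet L P N) = L.completeTheory (pInfSet L P N') :=
    StrongHomClass.elementarilyEquivalent (pInfEquiv L P g)
  classical exact if_congr hne (congrArg some hth) rfl

end PInf

theorem lift_eSpP_add_one_le_numModels (L : FirstOrder.Language.{0,0}) [L.IsRelational] {I : Type}
    (P : I → L.Relations 1) (T : L.Theory)
    (hinf : ∀ N : Theory.ModelType.{0,0,0} T, Infinite N)
    (N₀ : Theory.ModelType.{0,0,0} T) (hN₀ : #N₀ = ℵ₀) (hN₀P : pInfSet L P N₀ = ∅) :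
    Cardinal.lift.{1} (eSpP L P T) + 1 ≤ numModels L T ℵ₀ := by
  let Q := {N : Theory.ModelType.{0,0,0} T // #N = ℵ₀}
  let invariant : Quot (fun N N' : Q => Nonempty (N.1 ≃[L] N'.1)) → Option L.Theory :=
    Quot.lift (fun N => pInfTheory L P N.1) fun _ _ ⟨g⟩ => pInfTheory_eq_of_equiv L P g
  have hrange : ∀ x : Option {T0 : L.Theory // ∃ N : Theory.ModelType.{0,0,0} T,
      Countable N ∧ (pInfSet L P N).Nonempty ∧ T0 = L.completeTheory (pInfSet L P N)},
      x.map Subtype.val ∈ Set.range invariant := by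
    -- `none` is attained at `N₀`; `some T0` at any witness of `T0`, which is countably infinite.
    rintro (_ | ⟨T0, N, hN, hNP, rfl⟩)
    · refine ⟨Quot.mk _ ⟨N₀, hN₀⟩, ?_⟩
      simp [invariant, pInfTheory, hN₀P]
    · refine ⟨Quot.mk _ ⟨N, @mk_eq_aleph0 N hN (hinf N)⟩, ?_⟩
      simp [invariant, pInfTheory, hNP]
  calc Cardinal.lift.{1} (eSpP L P T) + 1
      = Cardinal.lift.{1} #(Option _) := by rw [mk_option, eSpP, lift_add, lift_one]
    _ ≤ Cardinal.lift.{1} #(Set.range invariant) :=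
      lift_le.2 <| mk_le_of_injective (f := fun x => ⟨_, hrange x⟩) fun x y hxy =>
        Option.map_injective Subtype.val_injective (congrArg Subtype.val hxy)
    _ ≤ Cardinal.lift.{0} (numModels L T ℵ₀) := mk_range_le_lift
    _ = numModels L T ℵ₀ := lift_uzero _

theorem lt_of_add_one_le_of_lt_aleph0 {a b : Cardinal} (h : a + 1 ≤ b) (hb : b < ℵ₀) :
    a < b := by
  obtain ⟨m, rfl⟩ := lt_aleph0.1 ((le_self_add.trans h).trans_lt hb)
  exact natCast_add_one_le_iff.1 h

theorem stmt18_general (L : FirstOrder.Language.{0,0}) [L.IsRelational] (M : Type) [L.Structure M]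
    (I : Type) (P : I → L.Relations 1)
    (hcard : L.card ≤ ℵ₀) (hinf : Infinite M)
    (hcover : ∀ a : M, ∃ i : I, Structure.RelMap (P i) ![a]) :
    Cardinal.lift.{1} (eSpP L P (L.completeTheory M)) ≤ numModels L (L.completeTheory M) ℵ₀ ∧
    (numModels L (L.completeTheory M) ℵ₀ = 1 → eSpP L P (L.completeTheory M) = 0) ∧
    ((1 < numModels L (L.completeTheory M) ℵ₀ ∧ numModels L (L.completeTheory M) ℵ₀ < ℵ₀) →
      Cardinal.lift.{1} (eSpP L P (L.completeTheory M)) < numModels L (L.completeTheory M) ℵ₀) := by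
  obtain ⟨S, -, hS⟩ :=
    exists_elementarySubstructure_card_eq L (∅ : Set M) (ℵ₀ : Cardinal.{0}) le_rfl (by simp)
      (by simpa using hcard) (by simp)
  have hSP : pInfSet L P S = ∅ :=
    pInfSet_eq_empty_of_embedding L P S.subtype.toEmbedding
      ((pInfSet_eq_empty_iff L P M).2 hcover)
  have hmodels_inf : ∀ N : Theory.ModelType.{0,0,0} (L.completeTheory M), Infinite N := fun N =>
    (model_infiniteTheory_iff L).1 (N.is_model.mono Theory.completeTheory.subset)
  have key := lift_eSpP_add_one_le_numModels L P _ hmodels_inf (Theory.ModelType.of _ S)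
    (by simpa using hS) hSP
  refine ⟨le_self_add.trans key, fun h1 => ?_,
    fun ⟨_, hfin⟩ => lt_of_add_one_le_of_lt_aleph0 key hfin⟩
  have h := lt_of_add_one_le_of_lt_aleph0 key (h1 ▸ one_lt_aleph0)
  rwa [h1, Cardinal.lt_one_iff, lift_eq_zero] at h

/-- for any countable theory `T = Th(M)` of a `P`-combination `M` (pairwise
disjoint predicates `P i` covering `M`, no relations across parts): `e-Sp(T) ≤ I(T, ω)`;
if `T` is ω-categorical (`I(T,ω) = 1`) then `e-Sp(T) = 0`; and if `T` is Ehrenfeucht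
(`1 < I(T,ω) < ω`) then `e-Sp(T) < I(T, ω)`. -/
theorem stmt18 (L : FirstOrder.Language.{0,0}) [L.IsRelational] (M : Type) [L.Structure M]
    (I : Type) (P : I → L.Relations 1)
    (hcard : L.card ≤ ℵ₀) (hctblI : Countable I) (hinf : Infinite M)
    (hdisj : ∀ i j : I, i ≠ j → ∀ a : M,
      ¬ (Structure.RelMap (P i) ![a] ∧ Structure.RelMap (P j) ![a]))
    (hne : ∀ i : I, ∃ a : M, Structure.RelMap (P i) ![a])
    (hcover : ∀ a : M, ∃ i : I, Structure.RelMap (P i) ![a])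
    (hnocross : ∀ (n : ℕ) (r : L.Relations n) (x : Fin n → M),
      Structure.RelMap r x → ∃ i : I, ∀ k : Fin n, Structure.RelMap (P i) ![x k]) :
    Cardinal.lift.{1} (eSpP L P (L.completeTheory M)) ≤ numModels L (L.completeTheory M) ℵ₀ ∧
    (numModels L (L.completeTheory M) ℵ₀ = 1 → eSpP L P (L.completeTheory M) = 0) ∧
    ((1 < numModels L (L.completeTheory M) ℵ₀ ∧ numModels L (L.completeTheory M) ℵ₀ < ℵ₀) →
      Cardinal.lift.{1} (eSpP L P (L.completeTheory M)) < numModels L (L.completeTheory M) ℵ₀) :=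
  stmt18_general L M I P hcard hinf hcover
end
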